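/- Let p be a prime with p ≡ 5 (mod 6) and p > 11. Suppose d, a, b, c, x, y, z, w are pairwise distinct vertices of G_p such that da, db, dc, ax, by, cz, wx, wy, wz are all edges of G_p (so these vertices and edges form a theta graph θ_{3,3} with endpoints d and w). Then, writing v = (v₁,v₂,v₃) for each vertex v, either w₁ = a₁ + b₁ + c₁, or a₁y₁ − a₁z₁ − b₁x₁ + b₁z₁ + c₁x₁ − c₁y₁ = 0 in 𝔽_p. -/

import Mathlib

open SimpleGraph

/-- The set `S ⊆ 𝔽_p` of residues of the integers `1, …, (p-5)/6`. -/
def Sset (p : ℕ) : Finset (ZMod p) :=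
  (Finset.Icc 1 ((p - 5) / 6)).image (fun k : ℕ => (k : ZMod p))

/-- The vertex set `V = S × 𝔽_p × 𝔽_p`. -/
abbrev Vert (p : ℕ) : Type := {v : ZMod p × ZMod p × ZMod p // v.1 ∈ Sset p}

/-- The graph `G_p`: distinct vertices `x = (x₁,x₂,x₃)` and `y = (y₁,y₂,y₃)` are adjacent
iff `x₂ + y₃ = x₁y₁²` and `x₃ + y₂ = x₁²y₁`. -/
def Gp (p : ℕ) : SimpleGraph (Vert p) where
  Adj x y := x ≠ y ∧
    x.val.2.1 + y.val.2.2 = x.val.1 * y.val.1 ^ 2 ∧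
    x.val.2.2 + y.val.2.1 = x.val.1 ^ 2 * y.val.1
  symm := by
    constructor
    rintro x y ⟨hne, h1, h2⟩
    exact ⟨hne.symm, by linear_combination h2, by linear_combination h1⟩
  loopless := ⟨fun x h => h.1 rfl⟩

instance (p : ℕ) : DecidableRel (Gp p).Adj := fun x y =>
  decidable_of_iff (x ≠ y ∧
    x.val.2.1 + y.val.2.2 = x.val.1 * y.val.1 ^ 2 ∧
    x.val.2.2 + y.val.2.1 = x.val.1 ^ 2 * y.val.1) Iff.rfl

/-! On a path `d – u – v – w` of `G_p`, subtracting the edge equations of `du` and `vw` from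
those of `uv` leaves two relations between `u₁, v₁` whose right-hand sides `pathT d w`,
`pathS d w` depend only on the endpoints; eliminating further gives a linear relation
`(u₁ + w₁) t = s (v₁ + d₁)`. So for the three paths of a theta graph the points
`(u₁, v₁)` are collinear in `𝔽_p²` (the second alternative is this determinant) as soon as
`t ≠ 0`, and `t = 0` would force the two middle vertices next to `w` to coincide,
because `x₁ + y₁ ≠ 0` on `S`. -/

lemma Sset_add_ne_zero {p : ℕ} {u v : ZMod p} (hu : u ∈ Sset p) (hv : v ∈ Sset p) :
    u + v ≠ 0 := by
  obtain ⟨k, hk, rfl⟩ := Finset.mem_image.mp hu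
  obtain ⟨j, hj, rfl⟩ := Finset.mem_image.mp hv
  rw [Finset.mem_Icc] at hk hj
  rw [← Nat.cast_add, Ne, ZMod.natCast_eq_zero_iff]
  intro hdvd
  have := Nat.le_of_dvd (by omega) hdvd
  omega

lemma sq_eq_sq_of_mem_Sset {p : ℕ} [Fact p.Prime] {u v : ZMod p} (hu : u ∈ Sset p)
    (hv : v ∈ Sset p) (h : u ^ 2 = v ^ 2) : u = v :=
  (sq_eq_sq_iff_eq_or_eq_neg.mp h).resolve_right fun h' =>
    Sset_add_ne_zero hu hv (by rw [h']; ring)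

lemma det_mul_eq_zero_of_line {R : Type*} [CommRing R] {s t w d a b c x y z : R}
    (ha : (a + w) * t = s * (x + d)) (hb : (b + w) * t = s * (y + d))
    (hc : (c + w) * t = s * (z + d)) :
    (a * y - a * z - b * x + b * z + c * x - c * y) * t = 0 := by
  linear_combination (y - z) * ha + (z - x) * hb + (x - y) * hc

namespace Gp

variable {p : ℕ}

def pathT (d w : Vert p) : ZMod p := d.val.1 ^ 2 * w.val.1 - (d.val.2.2 + w.val.2.1)

def pathS (d w : Vert p) : ZMod p := d.val.1 * w.val.1 ^ 2 - (d.val.2.1 + w.val.2.2)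

lemma eq_of_adj_of_adj_of_fst_eq {u v w : Vert p} (hu : (Gp p).Adj u w) (hv : (Gp p).Adj v w)
    (h : u.val.1 = v.val.1) : u = v := by
  obtain ⟨-, hu₁, hu₂⟩ := hu
  obtain ⟨-, hv₁, hv₂⟩ := hv
  refine Subtype.ext (Prod.ext h (Prod.ext ?_ ?_))
  · linear_combination hu₁ - hv₁ + w.val.1 ^ 2 * h
  · linear_combination hu₂ - hv₂ + (u.val.1 + v.val.1) * w.val.1 * h

section Path

variable {d u v w : Vert p} (hdu : (Gp p).Adj d u) (huv : (Gp p).Adj u v) (hwv : (Gp p).Adj w v)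
include hdu huv hwv

lemma path_eq_pathT :
    (u.val.1 - w.val.1) * (v.val.1 ^ 2 - d.val.1 ^ 2) = pathT d w := by
  obtain ⟨-, -, hdu₂⟩ := hdu
  obtain ⟨-, huv₁, -⟩ := huv
  obtain ⟨-, hwv₁, -⟩ := hwv
  unfold pathT
  linear_combination hwv₁ + hdu₂ - huv₁

lemma path_eq_pathS :
    (u.val.1 - w.val.1) * (u.val.1 + w.val.1) * (v.val.1 - d.val.1) = pathS d w := by
  obtain ⟨-, hdu₁, -⟩ := hdu
  obtain ⟨-, -, huv₂⟩ := huv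
  obtain ⟨-, -, hwv₂⟩ := hwv
  unfold pathS
  linear_combination hwv₂ + hdu₁ - huv₂

lemma path_line : (u.val.1 + w.val.1) * pathT d w = pathS d w * (v.val.1 + d.val.1) := by
  rw [← path_eq_pathT hdu huv hwv, ← path_eq_pathS hdu huv hwv]
  ring

end Path

lemma pathT_ne_zero [Fact p.Prime] {d a b x y w : Vert p}
    (hda : (Gp p).Adj d a) (hax : (Gp p).Adj a x) (hwx : (Gp p).Adj w x)
    (hdb : (Gp p).Adj d b) (hby : (Gp p).Adj b y) (hwy : (Gp p).Adj w y)
    (haw : a ≠ w) (hbw : b ≠ w) (hxy : x ≠ y) : pathT d w ≠ 0 := by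
  intro ht
  have hx : x.val.1 = d.val.1 := by
    have h := path_eq_pathT hda hax hwx
    rw [ht, mul_eq_zero, sub_eq_zero, sub_eq_zero] at h
    exact sq_eq_sq_of_mem_Sset x.prop d.prop <|
      h.resolve_left fun h' => haw (eq_of_adj_of_adj_of_fst_eq hax hwx h')
  have hy : y.val.1 = d.val.1 := by
    have h := path_eq_pathT hdb hby hwy
    rw [ht, mul_eq_zero, sub_eq_zero, sub_eq_zero] at h
    exact sq_eq_sq_of_mem_Sset y.prop d.prop <|
      h.resolve_left fun h' => hbw (eq_of_adj_of_adj_of_fst_eq hby hwy h')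
  exact hxy (eq_of_adj_of_adj_of_fst_eq hwx.symm hwy.symm (hx.trans hy.symm))

end Gp

theorem Gp_theta33_general (p : ℕ) [Fact p.Prime]
    (d a b c x y z w : Vert p)
    (hdist : [d, a, b, c, x, y, z, w].Pairwise (· ≠ ·))
    (eda : (Gp p).Adj d a) (edb : (Gp p).Adj d b) (edc : (Gp p).Adj d c)
    (eax : (Gp p).Adj a x) (eby : (Gp p).Adj b y) (ecz : (Gp p).Adj c z)
    (ewx : (Gp p).Adj w x) (ewy : (Gp p).Adj w y) (ewz : (Gp p).Adj w z) :
    w.val.1 = a.val.1 + b.val.1 + c.val.1 ∨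
    a.val.1 * y.val.1 - a.val.1 * z.val.1 - b.val.1 * x.val.1 + b.val.1 * z.val.1 +
      c.val.1 * x.val.1 - c.val.1 * y.val.1 = 0 := by
  simp only [List.pairwise_cons, List.mem_cons, List.not_mem_nil, or_false] at hdist
  have haw : a ≠ w := hdist.2.1 w (by simp)
  have hbw : b ≠ w := hdist.2.2.1 w (by simp)
  have hxy : x ≠ y := hdist.2.2.2.2.1 y (by simp)
  right
  refine (mul_eq_zero.mp (det_mul_eq_zero_of_line (Gp.path_line eda eax ewx)
    (Gp.path_line edb eby ewy) (Gp.path_line edc ecz ewz))).resolve_right ?_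
  exact Gp.pathT_ne_zero eda eax ewx edb eby ewy haw hbw hxy

/-- If pairwise distinct vertices `d, a, b, c, x, y, z, w` form a theta graph `θ_{3,3}`
with edges `da, db, dc, ax, by, cz, wx, wy, wz`, then `w₁ = a₁ + b₁ + c₁` or
`a₁y₁ − a₁z₁ − b₁x₁ + b₁z₁ + c₁x₁ − c₁y₁ = 0`. -/
theorem Gp_theta33 (p : ℕ) [Fact p.Prime] (h5 : p % 6 = 5) (h11 : 11 < p)
    (d a b c x y z w : Vert p)
    (hdist : [d, a, b, c, x, y, z, w].Pairwise (· ≠ ·))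
    (eda : (Gp p).Adj d a) (edb : (Gp p).Adj d b) (edc : (Gp p).Adj d c)
    (eax : (Gp p).Adj a x) (eby : (Gp p).Adj b y) (ecz : (Gp p).Adj c z)
    (ewx : (Gp p).Adj w x) (ewy : (Gp p).Adj w y) (ewz : (Gp p).Adj w z) :
    w.val.1 = a.val.1 + b.val.1 + c.val.1 ∨
    a.val.1 * y.val.1 - a.val.1 * z.val.1 - b.val.1 * x.val.1 + b.val.1 * z.val.1 +
      c.val.1 * x.val.1 - c.val.1 * y.val.1 = 0 :=
  Gp_theta33_general p d a b c x y z w hdist eda edb edc eax eby ecz ewx ewy ewz
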